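/- arXiv:math-ph/0703026 — 3 statements merged into one kernel-verified Lean document; each statement's English description precedes it below -/
import Mathlib

section
/- For real numbers a, b and a nonnegative integer n, the q-binomial theorem holds: (ab; q)_n = \sum_{k=0}^{n} \binom{n}{k}_q b^k (a; q)_k (b; q)_{n-k}, where (x;q)_m = \prod_{j=0}^{m-1}(1 - x q^j) and \binom{n}{k}_q = (q;q)_n / ((q;q)_{n-k}(q;q)_k). -/
/-!
Induction on `n`. Multiplying the `n`-th sum by `1 - ab q^n` and splitting, for the `k`-th term,
`(a;q)_k (b;q)_{n-k} (1 - ab q^n) = (a;q)_k (b;q)_{n-k+1} + b q^{n-k} (a;q)_{k+1} (b;q)_{n-k}`,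
the two resulting sums recombine into the `(n+1)`-st sum by the q-Pascal rule
`[n+1, k+1]_q = [n, k+1]_q + q^{n-k} [n, k]_q`.
-/

/-- The q-Pochhammer symbol `(a; q)_n = ∏_{j=0}^{n-1} (1 - a q^j)`. -/
noncomputable def qPoch (a q : ℝ) (n : ℕ) : ℝ :=
  ∏ j ∈ Finset.range n, (1 - a * q ^ j)

/-- The Gaussian binomial coefficient `[n k]_q = (q;q)_n / ((q;q)_{n-k} (q;q)_k)`. -/
noncomputable def qBinom (q : ℝ) (n k : ℕ) : ℝ :=
  qPoch q q n / (qPoch q q (n - k) * qPoch q q k)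

open Finset

lemma qPoch_zero (a q : ℝ) : qPoch a q 0 = 1 := rfl

lemma qPoch_succ (a q : ℝ) (n : ℕ) : qPoch a q (n + 1) = qPoch a q n * (1 - a * q ^ n) :=
  prod_range_succ _ _

lemma qPoch_self_ne_zero {q : ℝ} (hq : |q| ≠ 1) (n : ℕ) : qPoch q q n ≠ 0 := by
  refine prod_ne_zero_iff.mpr fun j _ => sub_ne_zero.mpr fun h => hq ?_
  rw [← pow_succ'] at h
  rw [← pow_eq_one_iff_of_nonneg (abs_nonneg q) j.succ_ne_zero, ← abs_pow, ← h, abs_one]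

lemma qPoch_mul_qPoch_mul_one_sub (a b q : ℝ) (k m : ℕ) :
    qPoch a q k * qPoch b q m * (1 - a * b * q ^ (k + m)) =
      qPoch a q k * qPoch b q (m + 1) + b * q ^ m * qPoch a q (k + 1) * qPoch b q m := by
  rw [qPoch_succ, qPoch_succ]
  ring

lemma qBinom_zero_right {q : ℝ} {n : ℕ} (hn : qPoch q q n ≠ 0) : qBinom q n 0 = 1 := by
  rw [qBinom, Nat.sub_zero, qPoch_zero, mul_one, div_self hn]

lemma qBinom_self {q : ℝ} {n : ℕ} (hn : qPoch q q n ≠ 0) : qBinom q n n = 1 := by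
  rw [qBinom, Nat.sub_self, qPoch_zero, one_mul, div_self hn]

lemma qBinom_succ_succ {q : ℝ} (hq : ∀ m, qPoch q q m ≠ 0) {n k : ℕ} (hk : k < n) :
    qBinom q (n + 1) (k + 1) = qBinom q n (k + 1) + q ^ (n - k) * qBinom q n k := by
  obtain ⟨m, rfl⟩ : ∃ m, n = k + m + 1 := ⟨n - k - 1, by omega⟩
  rw [qBinom, qBinom, qBinom, show k + m + 1 + 1 - (k + 1) = m + 1 by omega,
    show k + m + 1 - (k + 1) = m by omega, show k + m + 1 - k = m + 1 by omega,
    qPoch_succ q q (k + m + 1), qPoch_succ q q m, qPoch_succ q q k]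
  have hm : 1 - q * q ^ m ≠ 0 := right_ne_zero_of_mul (qPoch_succ q q m ▸ hq (m + 1))
  have hk : 1 - q * q ^ k ≠ 0 := right_ne_zero_of_mul (qPoch_succ q q k ▸ hq (k + 1))
  have := hq m
  have := hq k
  field_simp
  ring

noncomputable def qBinomSum (q a b : ℝ) (n : ℕ) : ℝ :=
  ∑ k ∈ range (n + 1), qBinom q n k * b ^ k * qPoch a q k * qPoch b q (n - k)

lemma qBinomSum_succ {q : ℝ} (hq : ∀ m, qPoch q q m ≠ 0) (a b : ℝ) (n : ℕ) :
    qBinomSum q a b (n + 1) = qBinomSum q a b n * (1 - a * b * q ^ n) := by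
  set U : ℕ → ℝ := fun k => qBinom q n k * b ^ k * qPoch a q k * qPoch b q (n + 1 - k)
  set V : ℕ → ℝ := fun k =>
    q ^ (n - k) * qBinom q n k * b ^ (k + 1) * qPoch a q (k + 1) * qPoch b q (n - k)
  have split : ∀ k ∈ range (n + 1),
      qBinom q n k * b ^ k * qPoch a q k * qPoch b q (n - k) * (1 - a * b * q ^ n) = U k + V k := by
    intro k hk
    obtain ⟨m, rfl⟩ : ∃ m, n = k + m := ⟨n - k, by have := mem_range.mp hk; omega⟩
    have key := qPoch_mul_qPoch_mul_one_sub a b q k m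
    simp only [U, V, show k + m + 1 - k = m + 1 by omega, Nat.add_sub_cancel_left]
    linear_combination qBinom q (k + m) k * b ^ k * key
  have pascal : ∀ k ∈ range n,
      qBinom q (n + 1) (k + 1) * b ^ (k + 1) * qPoch a q (k + 1) * qPoch b q (n + 1 - (k + 1)) =
        U (k + 1) + V k := by
    intro k hk
    simp only [U, V]
    rw [qBinom_succ_succ hq (mem_range.mp hk), Nat.add_sub_add_right]
    ring
  -- q-Pascal covers only the interior terms; the two boundary ones reduce to `[n, 0] = [n, n] = 1`.
  calc qBinomSum q a b (n + 1)
      = U 0 + ∑ k ∈ range n, (U (k + 1) + V k) + V n := by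
        rw [qBinomSum, sum_range_succ, sum_range_succ', sum_congr rfl pascal]
        simp only [U, V, qBinom_zero_right (hq _), qBinom_self (hq _), qPoch_zero, pow_zero,
          mul_one, one_mul, tsub_zero, tsub_self, Nat.reduceSubDiff]
        ring
    _ = ∑ k ∈ range (n + 1), (U k + V k) := by
        rw [sum_add_distrib, sum_add_distrib, sum_range_succ' U, sum_range_succ V]
        ring
    _ = qBinomSum q a b n * (1 - a * b * q ^ n) := by
        rw [qBinomSum, sum_mul, sum_congr rfl split]

/-- The q-binomial formula:
`(ab; q)_n = ∑_{k=0}^n [n k]_q b^k (a;q)_k (b;q)_{n-k}`. -/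
theorem q_binomial_formula (q a b : ℝ) (hq0 : 0 < q) (hq1 : q < 1) (n : ℕ) :
    qPoch (a * b) q n =
      ∑ k ∈ Finset.range (n + 1),
        qBinom q n k * b ^ k * qPoch a q k * qPoch b q (n - k) := by
  have hq : ∀ m, qPoch q q m ≠ 0 := qPoch_self_ne_zero (by rw [abs_of_pos hq0]; exact hq1.ne)
  induction n with
  | zero => simp [qPoch, qBinom]
  | succ n ih => rw [qPoch_succ, ih]; exact (qBinomSum_succ hq a b n).symm
end

section
/- For 0 < q < 1, integers r \ge 2 and n \ge 0, the q-duplication formula holds: \prod_{i=1}^{r-1} \Gamma_{q^r}(n + i/r) \cdot \frac{1}{[rn]_q!} = \prod_{i=1}^{r-1} \Gamma_{q^r}(i/r) \cdot \frac{1}{[n]_{q^r}!} \cdot \frac{1}{((r)_q)^{rn}}, where (r)_q = (1-q^r)/(1-q) = 1 + q + ... + q^{r-1}. -/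
/-- The infinite q-Pochhammer symbol `(a; Q)_∞ = ∏_{j=0}^∞ (1 - a Q^j)`. -/
noncomputable def qPochInf (a Q : ℝ) : ℝ := ∏' j : ℕ, (1 - a * Q ^ j)

/-- The q-Gamma function `Γ_Q(t) = (Q;Q)_∞ (1-Q)^{1-t} / (Q^t; Q)_∞`. -/
noncomputable def qGamma (Q t : ℝ) : ℝ :=
  qPochInf Q Q * (1 - Q) ^ (1 - t) / qPochInf (Q ^ t) Q

/-- The q-factorial `[n]_q! = (q;q)_n / (1-q)^n`. -/
noncomputable def qFact (q : ℝ) (n : ℕ) : ℝ := qPoch q q n / (1 - q) ^ n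

open Real Finset

lemma qdup_log_summable {Q a : ℝ} (hQ0 : 0 < Q) (hQ1 : Q < 1) (ha0 : 0 ≤ a) (ha1 : a < 1) :
    Summable (fun j : ℕ => Real.log (1 - a * Q ^ j)) := by
  have hgeo : Summable (fun j : ℕ => (a / (1 - a)) * Q ^ j) :=
    (summable_geometric_of_lt_one hQ0.le hQ1).mul_left _
  refine (Summable.of_nonneg_of_le (fun j => abs_nonneg _) (fun j => ?_) hgeo).of_abs
  set x := a * Q ^ j with hx
  have hx0 : 0 ≤ x := mul_nonneg ha0 (pow_nonneg hQ0.le _)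
  have hxa : x ≤ a := by
    calc x ≤ a * 1 := by
            apply mul_le_mul_of_nonneg_left _ ha0
            exact pow_le_one₀ hQ0.le hQ1.le
      _ = a := mul_one a
  have h1x : 0 < 1 - x := by linarith
  have hlog : Real.log (1 - x) ≤ 0 := Real.log_nonpos (by linarith) (by linarith)
  rw [abs_of_nonpos hlog]
  have : -Real.log (1 - x) = Real.log (1 - x)⁻¹ := (Real.log_inv _).symm
  rw [this]
  have h2 : Real.log (1 - x)⁻¹ ≤ (1 - x)⁻¹ - 1 :=
    Real.log_le_sub_one_of_pos (inv_pos.mpr h1x)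
  have h3 : (1 - x)⁻¹ - 1 = x / (1 - x) := by field_simp; ring
  have h4 : x / (1 - x) ≤ x / (1 - a) := by
    apply div_le_div_of_nonneg_left hx0 (by linarith) (by linarith)
  calc Real.log (1 - x)⁻¹ ≤ x / (1 - x) := by rw [← h3]; exact h2
    _ ≤ x / (1 - a) := h4
    _ = a / (1 - a) * Q ^ j := by rw [hx]; ring

lemma qdup_hasProd {Q a : ℝ} (hQ0 : 0 < Q) (hQ1 : Q < 1) (ha0 : 0 ≤ a) (ha1 : a < 1) :
    HasProd (fun j : ℕ => 1 - a * Q ^ j)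
      (Real.exp (∑' j : ℕ, Real.log (1 - a * Q ^ j))) := by
  have hpos : ∀ j : ℕ, 0 < 1 - a * Q ^ j := by
    intro j
    have : a * Q ^ j ≤ a := by
      calc a * Q ^ j ≤ a * 1 := mul_le_mul_of_nonneg_left (pow_le_one₀ hQ0.le hQ1.le) ha0
        _ = a := mul_one a
    linarith
  have h := ((qdup_log_summable hQ0 hQ1 ha0 ha1).hasSum).rexp
  have heq : (Real.exp ∘ fun j : ℕ => Real.log (1 - a * Q ^ j)) =
      fun j : ℕ => 1 - a * Q ^ j := funext fun j => Real.exp_log (hpos j)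
  rwa [heq] at h

lemma qPochInf_pos {Q a : ℝ} (hQ0 : 0 < Q) (hQ1 : Q < 1) (ha0 : 0 ≤ a) (ha1 : a < 1) :
    0 < qPochInf a Q := by
  have h : qPochInf a Q = Real.exp (∑' j : ℕ, Real.log (1 - a * Q ^ j)) :=
    (qdup_hasProd hQ0 hQ1 ha0 ha1).tprod_eq
  rw [h]
  exact Real.exp_pos _

lemma qPochInf_shift {Q a : ℝ} (hQ0 : 0 < Q) (hQ1 : Q < 1) (ha0 : 0 ≤ a) (ha1 : a < 1)
    (n : ℕ) : qPochInf a Q = qPoch a Q n * qPochInf (a * Q ^ n) Q := by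
  have ha0' : 0 ≤ a * Q ^ n := mul_nonneg ha0 (pow_nonneg hQ0.le _)
  have ha1' : a * Q ^ n < 1 := by
    calc a * Q ^ n ≤ a * 1 := mul_le_mul_of_nonneg_left (pow_le_one₀ hQ0.le hQ1.le) ha0
      _ = a := mul_one a
      _ < 1 := ha1
  have hm : Multipliable (fun j : ℕ => 1 - a * Q ^ n * Q ^ j) :=
    ⟨_, qdup_hasProd hQ0 hQ1 ha0' ha1'⟩
  have hm2 : Multipliable (fun j : ℕ => 1 - a * Q ^ (j + n)) := by
    refine hm.congr fun j => ?_
    rw [pow_add]; ring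
  have key := Multipliable.prod_mul_tprod_nat_mul' (f := fun j : ℕ => 1 - a * Q ^ j) (k := n) hm2
  have he : (∏' j : ℕ, (1 - a * Q ^ (j + n))) = qPochInf (a * Q ^ n) Q := by
    rw [qPochInf]
    exact tprod_congr fun j => by rw [pow_add]; ring
  rw [qPochInf, ← key, qPoch, he]

lemma qPoch_double (q : ℝ) (r : ℕ) (hr : 1 ≤ r) (n : ℕ) :
    (∏ i ∈ Icc 1 (r - 1), qPoch (q ^ i) (q ^ r) n) * qPoch (q ^ r) (q ^ r) n
      = qPoch q q (r * n) := by
  induction n with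
  | zero => simp [qPoch]
  | succ n ih =>
    have hstep : ∀ a : ℝ, ∀ m : ℕ, qPoch a (q ^ r) (m + 1)
        = qPoch a (q ^ r) m * (1 - a * (q ^ r) ^ m) := fun a m => prod_range_succ _ _
    have hR : qPoch q q (r * n + r) = qPoch q q (r * n) * ∏ j ∈ range r, (1 - q * q ^ (r * n + j)) := by
      rw [qPoch, qPoch, prod_range_add]
    rw [show r * (n + 1) = r * n + r by ring, hR, ← ih, hstep]
    have hprod : (∏ i ∈ Icc 1 (r - 1), qPoch (q ^ i) (q ^ r) (n + 1))
        = (∏ i ∈ Icc 1 (r - 1), qPoch (q ^ i) (q ^ r) n)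
          * ∏ i ∈ Icc 1 (r - 1), (1 - q ^ i * (q ^ r) ^ n) := by
      rw [← prod_mul_distrib]
      exact prod_congr rfl fun i _ => hstep _ _
    rw [hprod]
    have key : (∏ i ∈ Icc 1 (r - 1), (1 - q ^ i * (q ^ r) ^ n)) * (1 - q ^ r * (q ^ r) ^ n)
        = ∏ j ∈ range r, (1 - q * q ^ (r * n + j)) := by
      have h1 : (∏ i ∈ Icc 1 (r - 1), (1 - q ^ i * (q ^ r) ^ n)) * (1 - q ^ r * (q ^ r) ^ n)
          = ∏ i ∈ Icc 1 r, (1 - q ^ i * (q ^ r) ^ n) := by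
        conv_rhs => rw [show r = (r - 1) + 1 by omega]
        rw [prod_Icc_succ_top (by omega)]
        rw [show r - 1 + 1 = r by omega]
      rw [h1, show Icc 1 r = Ico 1 (r + 1) from (Finset.Ico_add_one_right_eq_Icc 1 r).symm,
        prod_Ico_eq_prod_range]
      rw [show r + 1 - 1 = r by omega]
      refine prod_congr rfl fun j _ => ?_
      rw [← pow_mul, ← pow_add, ← pow_succ']
      congr 2
      ring
    rw [← key]
    ring

lemma qPoch_pos {Q a : ℝ} (hQ0 : 0 < Q) (hQ1 : Q < 1) (ha0 : 0 ≤ a) (ha1 : a < 1) (n : ℕ) :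
    0 < qPoch a Q n := by
  refine prod_pos fun j _ => ?_
  have : a * Q ^ j ≤ a := by
    calc a * Q ^ j ≤ a * 1 := mul_le_mul_of_nonneg_left (pow_le_one₀ hQ0.le hQ1.le) ha0
      _ = a := mul_one a
  linarith


/-- The q-duplication formula:
`∏_{i=1}^{r-1} Γ_{q^r}(n + i/r) / [rn]_q! = ∏_{i=1}^{r-1} Γ_{q^r}(i/r) / ([n]_{q^r}! ((r)_q)^{rn})`. -/
theorem q_duplication_formula (q : ℝ) (hq0 : 0 < q) (hq1 : q < 1)
    (r n : ℕ) (hr : 2 ≤ r) :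
    (∏ i ∈ Finset.Icc 1 (r - 1), qGamma (q ^ r) ((n : ℝ) + (i : ℝ) / r)) *
        (1 / qFact q (r * n)) =
      (∏ i ∈ Finset.Icc 1 (r - 1), qGamma (q ^ r) ((i : ℝ) / r)) *
        (1 / qFact (q ^ r) n) *
        (1 / ((1 - q ^ r) / (1 - q)) ^ (r * n)) := by
  set Q : ℝ := q ^ r with hQdef
  have hrpos : 0 < r := by omega
  have hQ0 : 0 < Q := pow_pos hq0 r
  have hQ1 : Q < 1 := pow_lt_one₀ hq0.le hq1 (by omega)
  have h1Q : 0 < 1 - Q := by linarith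
  have h1q : 0 < 1 - q := by linarith
  have hrR : (0:ℝ) < r := by exact_mod_cast hrpos
  -- per-factor identity
  have hfac : ∀ i ∈ Icc 1 (r - 1),
      qGamma Q ((n : ℝ) + (i : ℝ) / r)
        = qGamma Q ((i : ℝ) / r) * (((1 - Q) ^ n)⁻¹ * qPoch (q ^ i) Q n) := by
    intro i hi
    simp only [mem_Icc] at hi
    have hi1 : 1 ≤ i := hi.1
    have hir : (i : ℝ) < r := by
      have : i < r := by omega
      exact_mod_cast this
    have ht0 : 0 < (i : ℝ) / r := by positivity
    have ht1 : (i : ℝ) / r < 1 := (div_lt_one hrR).mpr hir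
    have hQt : Q ^ ((i : ℝ) / r) = q ^ i := by
      rw [hQdef, ← Real.rpow_natCast q r, ← Real.rpow_mul hq0.le]
      rw [show (r : ℝ) * ((i : ℝ) / r) = (i : ℝ) by field_simp]
      exact Real.rpow_natCast q i
    have hqi0 : (0:ℝ) < q ^ i := pow_pos hq0 i
    have hqi1 : q ^ i < 1 := pow_lt_one₀ hq0.le hq1 (by omega)
    have hsplit : Q ^ ((n : ℝ) + (i : ℝ) / r) = q ^ i * Q ^ n := by
      rw [Real.rpow_add hQ0, Real.rpow_natCast, hQt, mul_comm]
    have hshift := qPochInf_shift hQ0 hQ1 hqi0.le hqi1 n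
    have hpinf : 0 < qPochInf (q ^ i * Q ^ n) Q := by
      refine qPochInf_pos hQ0 hQ1 (by positivity) ?_
      calc q ^ i * Q ^ n ≤ q ^ i * 1 :=
            mul_le_mul_of_nonneg_left (pow_le_one₀ hQ0.le hQ1.le) hqi0.le
        _ = q ^ i := mul_one _
        _ < 1 := hqi1
    have hpoch : 0 < qPoch (q ^ i) Q n := qPoch_pos hQ0 hQ1 hqi0.le hqi1 n
    have hexp : (1 - Q) ^ (1 - ((n : ℝ) + (i : ℝ) / r))
        = (1 - Q) ^ (1 - (i : ℝ) / r) * ((1 - Q) ^ n)⁻¹ := by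
      rw [show (1 : ℝ) - ((n : ℝ) + (i : ℝ) / r) = (1 - (i : ℝ) / r) + (-(n : ℝ)) by ring,
        Real.rpow_add h1Q, Real.rpow_neg h1Q.le, Real.rpow_natCast]
    rw [qGamma, qGamma, hsplit, hexp, hQt]
    rw [show qPochInf (q ^ i * Q ^ n) Q = qPochInf (q ^ i) Q / qPoch (q ^ i) Q n by
      rw [hshift]; field_simp]
    field_simp
  rw [prod_congr rfl hfac, prod_mul_distrib, prod_mul_distrib, prod_const,
    Nat.card_Icc]
  have hdouble := qPoch_double q r (by omega) n
  have hpochQ : 0 < qPoch Q Q n := qPoch_pos hQ0 hQ1 hQ0.le hQ1 n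
  have hpochq : 0 < qPoch q q (r * n) := qPoch_pos hq0 hq1 hq0.le hq1 (r * n)
  have hprodp : (∏ i ∈ Icc 1 (r - 1), qPoch (q ^ i) Q n) = qPoch q q (r * n) / qPoch Q Q n := by
    rw [← hdouble]; field_simp; rfl
  rw [hprodp, qFact, qFact]
  obtain ⟨m, rfl⟩ : ∃ m, r = m + 1 := ⟨r - 1, by omega⟩
  simp only [Nat.add_sub_cancel]
  have hpow2 : (1 - Q) ^ ((m + 1) * n) = ((1 - Q) ^ n) ^ m * (1 - Q) ^ n := by
    rw [← pow_mul, ← pow_add]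
    congr 1
    ring
  field_simp
  rw [div_pow (1 - Q), hpow2]
  field_simp
  rw [mul_assoc, ← mul_pow, one_div_mul_cancel (pow_ne_zero n h1Q.ne'), one_pow, mul_one]
end

section
/- For 0 < q < 1, integer r \ge 2, \delta > 0, and x real, the r-q^\delta-cosine \cos_r(x, q^r; \delta) = \sum_{m\ge 0} (-1)^m q^{\delta r \binom{m}{2}} x^{rm}/[rm]_q! is the unique solution of the system \Lambda_{q^\delta}^{-1} D_q^r u(x) = -u(x), u(0) = 1, D_q^k u(0) = 0 for k = 1,...,r-1, among functions given by convergent power series. -/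
/-- The q-derivative. -/
noncomputable def Dq (q : ℝ) (f : ℝ → ℝ) : ℝ → ℝ :=
  fun x => (f (q * x) - f x) / ((q - 1) * x)

/-- The r-q^δ-cosine `cos_r(x, q^r; δ) = ∑_m (-1)^m q^{δ r C(m,2)} x^{rm}/[rm]_q!`. -/
noncomputable def qCos (q : ℝ) (r : ℕ) (δ : ℝ) (x : ℝ) : ℝ :=
  ∑' m : ℕ, (-1 : ℝ) ^ m * q ^ (δ * (r : ℝ) * (m.choose 2 : ℝ)) * x ^ (r * m) /
    qFact q (r * m)

/-! ### Auxiliary definitions -/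

/-- The q-integer `[i]_q = (1-q^i)/(1-q)`. -/
noncomputable def qNat (q : ℝ) (i : ℕ) : ℝ := (1 - q ^ i) / (1 - q)

/-- Action of the q-derivative on power-series coefficients. -/
noncomputable def Da (q : ℝ) (b : ℕ → ℝ) : ℕ → ℝ := fun n => b (n + 1) * qNat q (n + 1)

/-- The coefficient sequence of the r-q^δ-cosine. -/
noncomputable def Ac (q : ℝ) (r : ℕ) (δ : ℝ) (n : ℕ) : ℝ :=
  if r ∣ n then (-1 : ℝ) ^ (n / r) * q ^ (δ * (r : ℝ) * ((n / r).choose 2 : ℝ)) / qFact q n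
  else 0

/-! ### Basic lemmas on q-factorials -/

lemma qFact_zero (q : ℝ) : qFact q 0 = 1 := by simp [qFact, qPoch]

lemma qFact_succ (q : ℝ) (hq1 : q < 1) (n : ℕ) :
    qFact q (n + 1) = qFact q n * qNat q (n + 1) := by
  have h1 : (1 : ℝ) - q ≠ 0 := by linarith
  simp only [qFact, qPoch, qNat, Finset.prod_range_succ]
  field_simp
  ring

lemma qNat_pos (q : ℝ) (hq0 : 0 < q) (hq1 : q < 1) (i : ℕ) (hi : 1 ≤ i) :
    1 ≤ qNat q i := by
  have h1 : (0:ℝ) < 1 - q := by linarith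
  rw [qNat, le_div_iff₀ h1]
  have : q ^ i ≤ q ^ 1 := pow_le_pow_of_le_one hq0.le hq1.le hi
  simp at this; nlinarith

lemma qNat_le (q : ℝ) (hq0 : 0 < q) (hq1 : q < 1) (i : ℕ) :
    qNat q i ≤ 1 / (1 - q) := by
  have h1 : (0:ℝ) < 1 - q := by linarith
  rw [qNat, div_le_div_iff₀ h1 h1]
  have : 0 ≤ q ^ i := pow_nonneg hq0.le i
  nlinarith

lemma qNat_nonneg (q : ℝ) (hq0 : 0 < q) (hq1 : q < 1) (i : ℕ) : 0 ≤ qNat q i := by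
  have h1 : (0:ℝ) < 1 - q := by linarith
  have : q ^ i ≤ 1 := pow_le_one₀ hq0.le hq1.le
  exact div_nonneg (by linarith) h1.le

lemma qFact_one_le (q : ℝ) (hq0 : 0 < q) (hq1 : q < 1) (n : ℕ) :
    1 ≤ qFact q n := by
  induction n with
  | zero => simp [qFact_zero]
  | succ n ih =>
      rw [qFact_succ q hq1]
      have := qNat_pos q hq0 hq1 (n+1) (by omega)
      nlinarith

lemma qFact_pos (q : ℝ) (hq0 : 0 < q) (hq1 : q < 1) (n : ℕ) : 0 < qFact q n :=
  lt_of_lt_of_le one_pos (qFact_one_le q hq0 hq1 n)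

lemma qFact_le_add (q : ℝ) (hq0 : 0 < q) (hq1 : q < 1) (n k : ℕ) :
    qFact q n ≤ qFact q (n + k) := by
  induction k with
  | zero => simp
  | succ k ih =>
      have h1 : qFact q (n + (k+1)) = qFact q (n+k) * qNat q (n+k+1) := by
        have := qFact_succ q hq1 (n+k); rw [← this]; congr 1
      rw [h1]
      have h2 := qNat_pos q hq0 hq1 (n+k+1) (by omega)
      have h3 := qFact_pos q hq0 hq1 (n+k)
      nlinarith

/-! ### Summability and tsum lemmas -/

lemma summable_zero_pow (c : ℕ → ℝ) : Summable (fun n => c n * (0:ℝ) ^ n) := by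
  apply summable_of_ne_finset_zero (s := {0})
  intro n hn
  simp only [Finset.mem_singleton] at hn
  rw [zero_pow hn, mul_zero]

lemma summable_Da (q : ℝ) (hq0 : 0 < q) (hq1 : q < 1) (b : ℕ → ℝ)
    (hb : ∀ x : ℝ, Summable (fun n => b n * x ^ n)) (x : ℝ) :
    Summable (fun n => Da q b n * x ^ n) := by
  rcases eq_or_ne x 0 with rfl | hx
  · exact summable_zero_pow _
  · rw [← summable_abs_iff]
    have h1 : Summable (fun n => |b (n+1) * x ^ (n+1)|) :=
      ((summable_nat_add_iff 1).2 (hb x)).abs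
    apply Summable.of_nonneg_of_le (fun n => abs_nonneg _)
      (f := fun n => (1/((1-q)*|x|)) * |b (n+1) * x ^ (n+1)|)
      (hf := h1.mul_left _)
    · intro n
      have hq : (0:ℝ) < 1 - q := by linarith
      have hxa : (0:ℝ) < |x| := abs_pos.2 hx
      rw [Da, abs_mul, abs_mul]
      simp only [abs_mul, abs_pow, pow_succ]
      have h2 : |qNat q (n+1)| ≤ 1/(1-q) := by
        rw [abs_of_nonneg (qNat_nonneg q hq0 hq1 _)]; exact qNat_le q hq0 hq1 _
      calc |b (n+1)| * |qNat q (n+1)| * |x| ^ n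
          ≤ |b (n+1)| * (1/(1-q)) * |x| ^ n := by
            apply mul_le_mul_of_nonneg_right _ (pow_nonneg (abs_nonneg x) n)
            exact mul_le_mul_of_nonneg_left h2 (abs_nonneg _)
        _ = 1 / ((1 - q) * |x|) * (|b (n + 1)| * (|x| ^ n * |x|)) := by
            field_simp

lemma Dq_tsum (q : ℝ) (hq0 : 0 < q) (hq1 : q < 1) (b : ℕ → ℝ)
    (hb : ∀ x : ℝ, Summable (fun n => b n * x ^ n)) (x : ℝ) (hx : x ≠ 0) :
    Dq q (fun y => ∑' n, b n * y ^ n) x = ∑' n, Da q b n * x ^ n := by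
  have hq1' : q - 1 ≠ 0 := by intro h; nlinarith [h]
  have hden : (q - 1) * x ≠ 0 := mul_ne_zero hq1' hx
  have hsub : Summable (fun n => b n * (q*x) ^ n - b n * x ^ n) := (hb (q*x)).sub (hb x)
  have key : Dq q (fun y => ∑' n, b n * y ^ n) x
      = ∑' n, (b n * (q*x) ^ n - b n * x ^ n) / ((q-1)*x) := by
    rw [Dq]
    rw [tsum_div_const, Summable.tsum_sub (hb (q*x)) (hb x)]
  rw [key, Summable.tsum_eq_zero_add (hsub.div_const _)]
  have h0 : (b 0 * (q*x) ^ 0 - b 0 * x ^ 0) / ((q-1)*x) = 0 := by simp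
  rw [h0, zero_add]
  apply tsum_congr
  intro n
  rw [Da, qNat]
  have h1q : (1:ℝ) - q ≠ 0 := by linarith
  field_simp
  ring

lemma summable_Da_iter (q : ℝ) (hq0 : 0 < q) (hq1 : q < 1) (b : ℕ → ℝ)
    (hb : ∀ x : ℝ, Summable (fun n => b n * x ^ n)) (k : ℕ) (x : ℝ) :
    Summable (fun n => (Da q)^[k] b n * x ^ n) := by
  induction k generalizing x with
  | zero => simpa using hb x
  | succ k ih =>
      rw [Function.iterate_succ_apply']
      exact summable_Da q hq0 hq1 _ (fun y => ih y) x

lemma Dq_iter_tsum (q : ℝ) (hq0 : 0 < q) (hq1 : q < 1) (b : ℕ → ℝ)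
    (hb : ∀ x : ℝ, Summable (fun n => b n * x ^ n)) (k : ℕ) (x : ℝ) (hx : x ≠ 0) :
    (Dq q)^[k] (fun y => ∑' n, b n * y ^ n) x = ∑' n, (Da q)^[k] b n * x ^ n := by
  induction k generalizing x with
  | zero => simp
  | succ k ih =>
      rw [Function.iterate_succ_apply', Function.iterate_succ_apply' (Da q)]
      have hqx : q * x ≠ 0 := mul_ne_zero hq0.ne' hx
      have : Dq q ((Dq q)^[k] fun y => ∑' n, b n * y ^ n) x
          = Dq q (fun y => ∑' n, (Da q)^[k] b n * y ^ n) x := by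
        simp only [Dq, ih (q*x) hqx, ih x hx]
      rw [this, Dq_tsum q hq0 hq1 _ (fun y => summable_Da_iter q hq0 hq1 b hb k y) x hx]

lemma Da_iter_eq (q : ℝ) (hq0 : 0 < q) (hq1 : q < 1) (b : ℕ → ℝ) (k n : ℕ) :
    (Da q)^[k] b n = b (n + k) * (qFact q (n + k) / qFact q n) := by
  induction k generalizing n with
  | zero => simp [div_self (qFact_pos q hq0 hq1 n).ne']
  | succ k ih =>
      rw [Function.iterate_succ_apply', Da, ih]
      have h1 := qFact_succ q hq1 n
      have h2 := (qFact_pos q hq0 hq1 n).ne'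
      have h3 := (qFact_pos q hq0 hq1 (n+1)).ne'
      have h4 : n + 1 + k = n + (k + 1) := by omega
      have h5 : qNat q (n+1) ≠ 0 := by
        have := qNat_pos q hq0 hq1 (n+1) (by omega); linarith
      rw [h4, h1]
      field_simp

/-- If a power series vanishes for all nonzero x, its coefficients vanish. -/
lemma coeff_eq_zero (c : ℕ → ℝ) (hs : ∀ x : ℝ, Summable (fun n => c n * x ^ n))
    (h : ∀ x : ℝ, x ≠ 0 → (∑' n, c n * x ^ n) = 0) : ∀ n, c n = 0 := by
  suffices H : ∀ c : ℕ → ℝ, (∀ x : ℝ, Summable (fun n => c n * x ^ n)) →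
      (∀ x : ℝ, x ≠ 0 → (∑' n, c n * x ^ n) = 0) → c 0 = 0 by
    intro n
    induction n generalizing c with
    | zero => exact H c hs h
    | succ n ih =>
        have hs' : ∀ x : ℝ, Summable (fun n => c (n+1) * x ^ n) := by
          intro x
          rcases eq_or_ne x 0 with rfl | hx
          · exact summable_zero_pow _
          · have := (summable_nat_add_iff 1).2 (hs x)
            have h2 : (fun n => c (n+1) * x ^ n) = fun n => (c (n+1) * x ^ (n+1)) * x⁻¹ := by
              funext n; field_simp [hx]; ring
            rw [h2]
            exact this.mul_right _
        have h' : ∀ x : ℝ, x ≠ 0 → (∑' n, c (n+1) * x ^ n) = 0 := by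
          intro x hx
          have h0 := h x hx
          rw [Summable.tsum_eq_zero_add (hs x)] at h0
          have hc0 : c 0 = 0 := H c hs h
          rw [hc0] at h0
          simp only [zero_mul, zero_add, pow_zero] at h0
          have h2 : (∑' n, c (n+1) * x ^ (n+1)) = x * ∑' n, c (n+1) * x ^ n := by
            rw [← tsum_mul_left]
            apply tsum_congr; intro n; ring
          rw [h2] at h0
          rcases mul_eq_zero.1 h0 with h3 | h3
          · exact absurd h3 hx
          · exact h3
        exact ih (fun n => c (n+1)) hs' h'
  clear h hs c
  intro c hs h
  by_contra hc
  set C := ∑' n, |c (n+1)| with hC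
  have hCs : Summable (fun n => |c (n+1)|) := by
    have := (hs 1).abs
    simp only [one_pow, mul_one] at this
    exact (summable_nat_add_iff 1).2 this
  have hC0 : 0 ≤ C := tsum_nonneg (fun n => abs_nonneg _)
  have key : ∀ x : ℝ, 0 < x → x ≤ 1 → |c 0| ≤ x * C := by
    intro x hx0 hx1
    have h0 := h x hx0.ne'
    rw [Summable.tsum_eq_zero_add (hs x)] at h0
    simp only [pow_zero, mul_one] at h0
    have hsabs : Summable (fun n => |c (n+1)| * x ^ (n+1)) := by
      apply ((summable_nat_add_iff 1).2 (hs x)).abs.congr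
      intro n
      rw [abs_mul, abs_pow, abs_of_pos hx0]
    have hb : |∑' n, c (n+1) * x ^ (n+1)| ≤ x * C := by
      have h1 : ∀ n : ℕ, |c (n+1)| * x ^ (n+1) ≤ x * |c (n+1)| := by
        intro n
        have hxn : x ^ (n+1) ≤ x := by
          calc x ^ (n+1) = x ^ n * x := pow_succ x n
            _ ≤ 1 * x := mul_le_mul_of_nonneg_right (pow_le_one₀ hx0.le hx1) hx0.le
            _ = x := one_mul x
        calc |c (n+1)| * x ^ (n+1) ≤ |c (n+1)| * x :=
              mul_le_mul_of_nonneg_left hxn (abs_nonneg _)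
          _ = x * |c (n+1)| := by ring
      calc |∑' n, c (n+1) * x ^ (n+1)| ≤ ∑' n, |c (n+1)| * x ^ (n+1) := by
            have hsn : Summable (fun n => ‖c (n+1) * x ^ (n+1)‖) := by
              apply ((summable_nat_add_iff 1).2 (hs x)).abs.congr
              intro n; rw [Real.norm_eq_abs]
            have h9 := norm_tsum_le_tsum_norm hsn
            rw [Real.norm_eq_abs] at h9
            refine h9.trans (le_of_eq (tsum_congr fun n => ?_))
            rw [Real.norm_eq_abs, abs_mul, abs_pow, abs_of_pos hx0]
        _ ≤ ∑' n, x * |c (n+1)| := Summable.tsum_le_tsum h1 hsabs (hCs.mul_left x)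
        _ = x * C := tsum_mul_left
    have : c 0 = -(∑' n, c (n+1) * x ^ (n+1)) := by linarith
    rw [this, abs_neg]
    exact hb
  have hcpos : 0 < |c 0| := abs_pos.2 hc
  set x := min 1 (|c 0| / (2 * (C + 1))) with hx
  have hx0 : 0 < x := lt_min one_pos (div_pos hcpos (by linarith))
  have hx1 : x ≤ 1 := min_le_left _ _
  have h1 := key x hx0 hx1
  have h2 : x ≤ |c 0| / (2 * (C + 1)) := min_le_right _ _
  have h3 : x * C ≤ (|c 0| / (2 * (C + 1))) * (C+1) := by
    apply mul_le_mul h2 (by linarith) hC0 (by positivity)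
  have h4 : (|c 0| / (2 * (C + 1))) * (C+1) = |c 0| / 2 := by
    field_simp
  rw [h4] at h3
  linarith

lemma hrinj (r : ℕ) (hr : r ≠ 0) : Function.Injective (fun m : ℕ => r * m) := by
  intro a b h
  simpa [hr] using h

lemma Ac_mul (q : ℝ) (r : ℕ) (δ : ℝ) (hr : r ≠ 0) (m : ℕ) :
    Ac q r δ (r * m) = (-1 : ℝ) ^ m * q ^ (δ * (r : ℝ) * (m.choose 2 : ℝ)) / qFact q (r * m) := by
  rw [Ac, if_pos (Dvd.intro m rfl), Nat.mul_div_cancel_left m (Nat.pos_of_ne_zero hr)]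

lemma Ac_not_dvd (q : ℝ) (r : ℕ) (δ : ℝ) (n : ℕ) (h : ¬ r ∣ n) : Ac q r δ n = 0 := by
  rw [Ac, if_neg h]

lemma qCos_eq (q : ℝ) (r : ℕ) (δ : ℝ) (hr : r ≠ 0) (x : ℝ) :
    qCos q r δ x = ∑' n, Ac q r δ n * x ^ n := by
  rw [qCos]
  rw [← Function.Injective.tsum_eq (g := fun m : ℕ => r * m) (hrinj r hr)
    (f := fun n => Ac q r δ n * x ^ n)]
  · apply tsum_congr
    intro m
    rw [Ac_mul q r δ hr m]
    ring
  · intro n hn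
    simp only [Function.mem_support, ne_eq] at hn
    by_contra hc
    apply hn
    have hnd : ¬ r ∣ n := by
      rintro ⟨m, hm⟩
      exact hc ⟨m, hm.symm⟩
    rw [Ac_not_dvd q r δ n hnd, zero_mul]
lemma choose_exp (q δ : ℝ) (hq0 : 0 < q) (r m : ℕ) :
    q ^ (δ * (r : ℝ) * (((m+1).choose 2 : ℕ) : ℝ))
      = q ^ (δ * (r : ℝ) * ((m.choose 2 : ℕ) : ℝ)) * q ^ (δ * ((r * m : ℕ) : ℝ)) := by
  rw [← Real.rpow_add hq0]
  congr 1
  have h : (m+1).choose 2 = m.choose 2 + m := by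
    rw [Nat.choose_succ_succ m 1, Nat.choose_one_right, Nat.add_comm]
  rw [h]
  push_cast
  ring

lemma key_summable (q : ℝ) (hq0 : 0 < q) (hq1 : q < 1) (r : ℕ) (hr : r ≠ 0)
    (δ : ℝ) (hδ : 0 < δ) (x : ℝ) :
    Summable (fun m : ℕ =>
        (-1:ℝ) ^ m * q ^ (δ * (r:ℝ) * ((m.choose 2 : ℕ):ℝ)) * x ^ (r*m) / qFact q (r*m)) := by
    have hbase : q ^ (δ * (r:ℝ)) < 1 :=
      Real.rpow_lt_one hq0.le hq1 (by positivity)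
    have hbase0 : 0 < q ^ (δ * (r:ℝ)) := Real.rpow_pos_of_pos hq0 _
    have htend : Filter.Tendsto (fun m : ℕ => (q ^ (δ * (r:ℝ))) ^ m) Filter.atTop (nhds 0) :=
      tendsto_pow_atTop_nhds_zero_of_lt_one hbase0.le hbase
    have hev : ∀ᶠ m in Filter.atTop,
        (q ^ (δ * (r:ℝ))) ^ m < (1/2) / (|x| ^ r + 1) := by
      apply htend.eventually_lt_const
      positivity
    apply summable_of_ratio_norm_eventually_le (r := 1/2) (by norm_num)
    filter_upwards [hev] with m hm
    have hF1 : 0 < qFact q (r*m) := qFact_pos q hq0 hq1 _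
    have hF2 : 0 < qFact q (r*(m+1)) := qFact_pos q hq0 hq1 _
    have hFle : qFact q (r*m) ≤ qFact q (r*(m+1)) := by
      have := qFact_le_add q hq0 hq1 (r*m) r
      have he : r * m + r = r * (m+1) := by ring
      rwa [he] at this
    have hq2 : ∀ k : ℕ, (0:ℝ) < q ^ (δ * (r:ℝ) * ((k.choose 2 : ℕ):ℝ)) :=
      fun k => Real.rpow_pos_of_pos hq0 _
    have hnorm : ∀ k : ℕ, ‖(-1:ℝ) ^ k * q ^ (δ * (r:ℝ) * ((k.choose 2 : ℕ):ℝ)) * x ^ (r*k) / qFact q (r*k)‖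
        = q ^ (δ * (r:ℝ) * ((k.choose 2 : ℕ):ℝ)) * |x| ^ (r*k) / qFact q (r*k) := by
      intro k
      rw [Real.norm_eq_abs, abs_div, abs_mul, abs_mul, abs_pow, abs_pow, abs_neg, abs_one,
        one_pow, one_mul, abs_of_pos (hq2 k), abs_of_pos (qFact_pos q hq0 hq1 _)]
    rw [hnorm m, hnorm (m+1)]
    -- rewrite the (m+1) exponent
    rw [choose_exp q δ hq0 r m]
    have hxr : |x| ^ (r*(m+1)) = |x| ^ (r*m) * |x| ^ r := by
      rw [← pow_add]; ring_nf
    rw [hxr]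
    have hqrm : q ^ (δ * ((r*m : ℕ):ℝ)) = (q ^ (δ * (r:ℝ))) ^ m := by
      rw [← Real.rpow_natCast (q ^ (δ * (r:ℝ))) m, ← Real.rpow_mul hq0.le]
      congr 1
      push_cast
      ring
    rw [hqrm]
    set A := q ^ (δ * (r:ℝ) * ((m.choose 2 : ℕ):ℝ)) with hA
    set B := (q ^ (δ * (r:ℝ))) ^ m with hB
    have hB0 : 0 < B := pow_pos hbase0 m
    have hA0 : 0 < A := hq2 m
    have hxp : (0:ℝ) ≤ |x| ^ (r*m) := pow_nonneg (abs_nonneg x) _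
    have hxr0 : (0:ℝ) ≤ |x| ^ r := pow_nonneg (abs_nonneg x) _
    calc A * B * (|x| ^ (r*m) * |x| ^ r) / qFact q (r*(m+1))
        ≤ A * B * (|x| ^ (r*m) * |x| ^ r) / qFact q (r*m) := by
          apply div_le_div_of_nonneg_left _ hF1 hFle
          positivity
      _ = (B * |x| ^ r) * (A * |x| ^ (r*m) / qFact q (r*m)) := by ring
      _ ≤ (1/2) * (A * |x| ^ (r*m) / qFact q (r*m)) := by
          apply mul_le_mul_of_nonneg_right _ (by positivity)
          have h1 : B * (|x| ^ r + 1) ≤ 1/2 := by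
            have := mul_le_mul_of_nonneg_right hm.le (by positivity : (0:ℝ) ≤ |x| ^ r + 1)
            calc B * (|x| ^ r + 1) ≤ (1/2) / (|x| ^ r + 1) * (|x| ^ r + 1) := this
              _ = 1/2 := by field_simp
          nlinarith

lemma summable_Ac (q : ℝ) (hq0 : 0 < q) (hq1 : q < 1) (r : ℕ) (hr : r ≠ 0)
    (δ : ℝ) (hδ : 0 < δ) (x : ℝ) :
    Summable (fun n => Ac q r δ n * x ^ n) := by
  rw [← Function.Injective.summable_iff (hrinj r hr)]
  · -- Summable (fun m => Ac (r*m) * x^(r*m))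
    have key : Summable (fun m : ℕ =>
        (-1:ℝ) ^ m * q ^ (δ * (r:ℝ) * ((m.choose 2 : ℕ):ℝ)) * x ^ (r*m) / qFact q (r*m)) := by
      exact key_summable q hq0 hq1 r hr δ hδ x
    exact key.congr (fun m => by
      simp only [Function.comp_apply]
      rw [Ac_mul q r δ hr m]
      ring)
  · intro n hn
    by_contra hc
    apply hc
    have hnd : ¬ r ∣ n := by
      rintro ⟨m, hm⟩
      exact absurd ⟨m, hm.symm⟩ hn
    rw [Ac_not_dvd q r δ n hnd, zero_mul]

lemma Ac_zero (q : ℝ) (r : ℕ) (δ : ℝ) : Ac q r δ 0 = 1 := by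
  rw [Ac, if_pos (dvd_zero r)]
  simp [qFact_zero, Real.rpow_natCast]

lemma Ac_identity (q : ℝ) (hq0 : 0 < q) (hq1 : q < 1) (r : ℕ) (hr : r ≠ 0)
    (δ : ℝ) (n : ℕ) :
    (Da q)^[r] (Ac q r δ) n * q ^ (-δ * (n:ℝ)) = - Ac q r δ n := by
  rw [Da_iter_eq q hq0 hq1]
  by_cases h : r ∣ n
  · obtain ⟨m, rfl⟩ := h
    have he : r * m + r = r * (m+1) := by ring
    rw [he, Ac_mul q r δ hr m, Ac_mul q r δ hr (m+1), choose_exp q δ hq0 r m]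
    have hc : q ^ (δ * ((r*m : ℕ):ℝ)) * q ^ (-δ * ((r*m : ℕ):ℝ)) = 1 := by
      rw [← Real.rpow_add hq0]
      have : δ * ((r*m : ℕ):ℝ) + (-δ * ((r*m : ℕ):ℝ)) = 0 := by ring
      rw [this, Real.rpow_zero]
    have hF1 := (qFact_pos q hq0 hq1 (r*m)).ne'
    have hF2 := (qFact_pos q hq0 hq1 (r*(m+1))).ne'
    have expand : ∀ X Y Y' F1 F2 : ℝ, F1 ≠ 0 → F2 ≠ 0 → Y * Y' = 1 →
        (-1:ℝ)^(m+1) * (X * Y) / F2 * (F2 / F1) * Y' = -((-1)^m * X / F1) := by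
      intro X Y Y' F1 F2 h1 h2 h3
      have hstep : (-1:ℝ)^(m+1)*(X*Y)/F2*(F2/F1)*Y' = ((-1)^(m+1)*X/F1)*(Y*Y')*(F2/F2) := by
        ring
      rw [hstep, h3, div_self h2, mul_one, mul_one, pow_succ]
      ring
    exact expand _ _ _ _ _ hF1 hF2 hc
  · have h2 : ¬ r ∣ (n + r) := by
      intro hdvd
      exact h (Nat.dvd_add_self_right.1 hdvd)
    rw [Ac_not_dvd q r δ n h, Ac_not_dvd q r δ (n+r) h2]
    simp
/-- `cos_r(·, q^r; δ)` solves `Λ_{q^δ}^{-1} D_q^r u = -u`, `u(0)=1`, with vanishing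
initial coefficients, and is the unique power-series solution of this system. -/
theorem qCos_unique_solution (q : ℝ) (hq0 : 0 < q) (hq1 : q < 1)
    (r : ℕ) (hr : 2 ≤ r) (δ : ℝ) (hδ : 0 < δ) :
    (∀ x : ℝ, x ≠ 0 → (Dq q)^[r] (qCos q r δ) (q ^ (-δ) * x) = - qCos q r δ x) ∧
    qCos q r δ 0 = 1 ∧
    (∀ a : ℕ → ℝ, (∀ x : ℝ, Summable (fun n : ℕ => a n * x ^ n)) →
      a 0 = 1 → (∀ k : ℕ, 1 ≤ k → k ≤ r - 1 → a k = 0) →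
      (∀ x : ℝ, x ≠ 0 →
        (Dq q)^[r] (fun y => ∑' n : ℕ, a n * y ^ n) (q ^ (-δ) * x) =
          -(∑' n : ℕ, a n * x ^ n)) →
      ∀ x : ℝ, (∑' n : ℕ, a n * x ^ n) = qCos q r δ x) := by
  have hr0 : r ≠ 0 := by omega
  have hAsum : ∀ y : ℝ, Summable (fun n => Ac q r δ n * y ^ n) :=
    fun y => summable_Ac q hq0 hq1 r hr0 δ hδ y
  have hfun : qCos q r δ = fun y => ∑' n, Ac q r δ n * y ^ n :=
    funext (qCos_eq q r δ hr0)
  have hrp : (0:ℝ) < q ^ (-δ) := Real.rpow_pos_of_pos hq0 _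
  -- key rewriting of powers of q^(-δ)
  have hpow : ∀ (n : ℕ) (x : ℝ), (q ^ (-δ) * x) ^ n = q ^ (-δ * (n:ℝ)) * x ^ n := by
    intro n x
    rw [mul_pow, ← Real.rpow_natCast (q ^ (-δ)) n, ← Real.rpow_mul hq0.le]
  refine ⟨?_, ?_, ?_⟩
  · -- qCos satisfies the equation
    intro x hx
    have hy : q ^ (-δ) * x ≠ 0 := mul_ne_zero hrp.ne' hx
    rw [hfun, Dq_iter_tsum q hq0 hq1 _ hAsum r _ hy]
    have hterm : ∀ n : ℕ, (Da q)^[r] (Ac q r δ) n * (q ^ (-δ) * x) ^ n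
        = -(Ac q r δ n * x ^ n) := by
      intro n
      rw [hpow n x, ← mul_assoc, Ac_identity q hq0 hq1 r hr0 δ n]
      ring
    rw [tsum_congr hterm, tsum_neg]
  · -- value at 0
    rw [qCos, tsum_eq_single 0]
    · norm_num [qFact_zero]
    · intro m hm
      have h1 : r * m ≠ 0 := by positivity
      rw [zero_pow h1]
      simp
  · -- uniqueness
    intro a hsum ha0 hak heq x
    -- the coefficient identity satisfied by a
    have hS1 : ∀ y : ℝ, Summable (fun n => (Da q)^[r] a n * q ^ (-δ * (n:ℝ)) * y ^ n) := by
      intro y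
      apply (summable_Da_iter q hq0 hq1 a hsum r (q ^ (-δ) * y)).congr
      intro n
      rw [hpow n y, ← mul_assoc]
    have hd : ∀ n, (Da q)^[r] a n * q ^ (-δ * (n:ℝ)) + a n = 0 := by
      apply coeff_eq_zero
      · intro y
        apply ((hS1 y).add (hsum y)).congr
        intro n
        ring
      · intro y hy
        have h1 : (∑' n, ((Da q)^[r] a n * q ^ (-δ * (n:ℝ)) + a n) * y ^ n)
            = (∑' n, (Da q)^[r] a n * q ^ (-δ * (n:ℝ)) * y ^ n) + ∑' n, a n * y ^ n := by
          rw [← Summable.tsum_add (hS1 y) (hsum y)]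
          apply tsum_congr
          intro n
          ring
        have h2 : (∑' n, (Da q)^[r] a n * q ^ (-δ * (n:ℝ)) * y ^ n)
            = ∑' n, (Da q)^[r] a n * (q ^ (-δ) * y) ^ n := by
          apply tsum_congr
          intro n
          rw [hpow n y, ← mul_assoc]
        have hy' : q ^ (-δ) * y ≠ 0 := mul_ne_zero hrp.ne' hy
        rw [h1, h2, ← Dq_iter_tsum q hq0 hq1 a hsum r _ hy', heq y hy]
        ring
    -- coefficients agree
    have hF : ∀ n, (0:ℝ) < qFact q n := qFact_pos q hq0 hq1
    have hd' : ∀ n, a (n+r) * (qFact q (n+r) / qFact q n) * q ^ (-δ * (n:ℝ)) + a n = 0 := by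
      intro n
      have := hd n
      rwa [Da_iter_eq q hq0 hq1 a r n] at this
    have hA' : ∀ n, Ac q r δ (n+r) * (qFact q (n+r) / qFact q n) * q ^ (-δ * (n:ℝ))
        + Ac q r δ n = 0 := by
      intro n
      have := Ac_identity q hq0 hq1 r hr0 δ n
      rw [Da_iter_eq q hq0 hq1 _ r n] at this
      linarith
    have hcoeff : ∀ n, a n = Ac q r δ n := by
      intro n
      induction n using Nat.strong_induction_on with
      | _ n ih =>
        rcases lt_or_ge n r with hn | hn
        · rcases Nat.eq_zero_or_pos n with rfl | hn1
          · rw [ha0, Ac_zero]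
          · rw [hak n hn1 (by omega), Ac_not_dvd]
            intro hdvd
            have := Nat.le_of_dvd hn1 hdvd
            omega
        · set m := n - r with hm
          have hmr : n = m + r := by omega
          have hmlt : m < n := by omega
          have h1 := hd' m
          have h2 := hA' m
          have h3 := ih m hmlt
          have key : (a (m+r) - Ac q r δ (m+r))
              * (qFact q (m+r) / qFact q m * q ^ (-δ * (m:ℝ))) = 0 := by
            linear_combination h1 - h2 - h3
          have hW : qFact q (m+r) / qFact q m * q ^ (-δ * (m:ℝ)) ≠ 0 :=
            mul_ne_zero (div_ne_zero (hF _).ne' (hF _).ne') (Real.rpow_pos_of_pos hq0 _).ne'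
          have h4 : a (m+r) - Ac q r δ (m+r) = 0 := by
            rcases mul_eq_zero.1 key with h | h
            · exact h
            · exact absurd h hW
          rw [hmr]
          linarith
    rw [tsum_congr (fun n => by rw [hcoeff n]), ← qCos_eq q r δ hr0]
end
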